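/- Let Γ be an N×n real matrix with columns Γe₁,…,Γeₙ. If Γe₁ ∈ absconv(Γe_j : j ∈ {2,…,n}), then the compatibility constant φ(1, {1}) equals 0, and the restricted eigenvalue constant κ(1, m, 1) equals 0 for every 1 ≤ m ≤ n. -/
import Mathlib


open MeasureTheory ProbabilityTheory Finset

/-- The ℓ¹ norm of a vector in ℝⁿ. -/
noncomputable def l1norm {n : ℕ} (x : Fin n → ℝ) : ℝ := ∑ j, |x j|

/-- The Euclidean (ℓ²) norm of a vector in ℝⁿ. -/
noncomputable def l2norm {n : ℕ} (x : Fin n → ℝ) : ℝ := Real.sqrt (∑ j, (x j) ^ 2)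

/-- `x` is `s`-sparse: it is supported on at most `s` coordinates. -/
def IsSparse {n : ℕ} (s : ℕ) (x : Fin n → ℝ) : Prop := Set.ncard {j | x j ≠ 0} ≤ s

/-- The exact reconstruction property of order `s`: for every `s`-sparse vector `x₀`,
the set of ℓ¹-minimizers over `{t | Γ t = Γ x₀}` is exactly `{x₀}`. -/
def ER {N n : ℕ} (Γ : Matrix (Fin N) (Fin n) ℝ) (s : ℕ) : Prop :=
  ∀ x₀ : Fin n → ℝ, IsSparse s x₀ →
    {t : Fin n → ℝ | Γ.mulVec t = Γ.mulVec x₀ ∧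
      ∀ t' : Fin n → ℝ, Γ.mulVec t' = Γ.mulVec x₀ → l1norm t ≤ l1norm t'} = {x₀}

/-- The compatibility constant
`φ(L,S) = √|S| · inf{‖Γζ_S − Γζ_{S^c}‖₂ : ζ_S supported in S, ‖ζ_S‖₁ = 1,
ζ_{S^c} supported in Sᶜ, ‖ζ_{S^c}‖₁ ≤ L}`. -/
noncomputable def compat {N n : ℕ} (Γ : Matrix (Fin N) (Fin n) ℝ) (L : ℝ)
    (S : Finset (Fin n)) : ℝ :=
  Real.sqrt S.card *
    sInf {r : ℝ | ∃ ζS ζSc : Fin n → ℝ,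
      (∀ j ∉ S, ζS j = 0) ∧ (∀ j ∈ S, ζSc j = 0) ∧
      l1norm ζS = 1 ∧ l1norm ζSc ≤ L ∧
      r = l2norm (Γ.mulVec ζS - Γ.mulVec ζSc)}

/-- The restricted eigenvalue constant `κ(s,m,c)`: the infimum of `‖Γx‖₂/‖x_{S₀₁}‖₂` over
all `S₀` with `|S₀| ≤ s` and all `x ≠ 0` with `‖x_{S₀ᶜ}‖₁ ≤ c‖x_{S₀}‖₁`, where `S₁` is a
set of indices of the `m` largest coordinates of `(|x_i|)` outside `S₀` and `x_{S₀₁}` is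
the restriction of `x` to `S₀ ∪ S₁`. -/
noncomputable def recConst {N n : ℕ} (Γ : Matrix (Fin N) (Fin n) ℝ) (s m : ℕ)
    (c : ℝ) : ℝ :=
  sInf {r : ℝ | ∃ (S₀ S₁ : Finset (Fin n)) (x : Fin n → ℝ), x ≠ 0 ∧
    S₀.card ≤ s ∧ Disjoint S₀ S₁ ∧ S₁.card = min m (n - S₀.card) ∧
    (∀ i ∈ S₁, ∀ j, j ∉ S₀ → j ∉ S₁ → |x j| ≤ |x i|) ∧
    l1norm (fun j => if j ∈ S₀ then 0 else x j) ≤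
      c * l1norm (fun j => if j ∈ S₀ then x j else 0) ∧
    r = l2norm (Γ.mulVec x) / l2norm (fun j => if j ∈ S₀ ∪ S₁ then x j else 0)}

/-- `absconv S`: the convex hull of `S ∪ (-S)`. -/
def absconv {N : ℕ} (S : Set (Fin N → ℝ)) : Set (Fin N → ℝ) := convexHull ℝ (S ∪ -S)

lemma l1norm_single {n : ℕ} (j : Fin n) : l1norm (Pi.single j (1:ℝ)) = 1 := by
  simp [l1norm, Pi.single_apply, apply_ite abs, Finset.sum_ite_eq']

lemma mulVec_sum' {N n : ℕ} (Γ : Matrix (Fin N) (Fin n) ℝ) {ι : Type} (t : Finset ι)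
    (f : ι → Fin n → ℝ) : Γ.mulVec (∑ i ∈ t, f i) = ∑ i ∈ t, Γ.mulVec (f i) := by
  have := map_sum Γ.mulVecLin f t
  simpa only [Matrix.mulVecLin_apply] using this

lemma l1norm_sum_le {n : ℕ} {ι : Type} (t : Finset ι) (f : ι → Fin n → ℝ) :
    l1norm (∑ i ∈ t, f i) ≤ ∑ i ∈ t, l1norm (f i) := by
  unfold l1norm
  rw [Finset.sum_comm]
  refine Finset.sum_le_sum fun k _ => ?_
  rw [Finset.sum_apply]
  exact Finset.abs_sum_le_sum_abs _ _

lemma l1norm_smul {n : ℕ} (c : ℝ) (x : Fin n → ℝ) : l1norm (c • x) = |c| * l1norm x := by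
  simp [l1norm, abs_mul, Finset.mul_sum]

lemma sInf_eq_zero' {A : Set ℝ} (h0 : (0:ℝ) ∈ A) (hlb : ∀ r ∈ A, 0 ≤ r) : sInf A = 0 :=
  le_antisymm (csInf_le ⟨0, hlb⟩ h0) (le_csInf ⟨0, h0⟩ hlb)

lemma exists_top {n : ℕ} (f : Fin n → ℝ) :
    ∀ (k : ℕ) (T : Finset (Fin n)), k ≤ T.card →
      ∃ S : Finset (Fin n), S ⊆ T ∧ S.card = k ∧
        ∀ i ∈ S, ∀ j ∈ T, j ∉ S → f j ≤ f i := by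
  intro k
  induction k with
  | zero => exact fun T _ => ⟨∅, empty_subset T, rfl, by simp⟩
  | succ k ih =>
    intro T hT
    obtain ⟨S, hST, hcard, hmax⟩ := ih T (Nat.le_of_succ_le hT)
    have hne : (T \ S).Nonempty := by
      rw [← Finset.card_pos, Finset.card_sdiff_of_subset hST, hcard]; omega
    obtain ⟨i₀, hi₀, hmax₀⟩ := (T \ S).exists_max_image f hne
    have hi₀T := (Finset.mem_sdiff.1 hi₀).1
    have hi₀S := (Finset.mem_sdiff.1 hi₀).2
    refine ⟨insert i₀ S, Finset.insert_subset hi₀T hST,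
      by rw [Finset.card_insert_of_notMem hi₀S, hcard], ?_⟩
    intro i hi j hjT hjS
    rcases Finset.mem_insert.1 hi with rfl | hiS
    · exact hmax₀ j (Finset.mem_sdiff.2 ⟨hjT, fun hj => hjS (Finset.mem_insert_of_mem hj)⟩)
    · exact hmax i hiS j hjT (fun hj => hjS (Finset.mem_insert_of_mem hj))

lemma key {N n : ℕ} (hn : 0 < n) (Γ : Matrix (Fin N) (Fin n) ℝ)
    (h : Γ.mulVec (Pi.single (⟨0, hn⟩ : Fin n) 1) ∈
      absconv {v | ∃ j : Fin n, j ≠ ⟨0, hn⟩ ∧ v = Γ.mulVec (Pi.single j 1)}) :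
    ∃ ζ : Fin n → ℝ, ζ ⟨0, hn⟩ = 0 ∧ l1norm ζ ≤ 1 ∧
      Γ.mulVec ζ = Γ.mulVec (Pi.single (⟨0, hn⟩ : Fin n) 1) := by
  rw [absconv, _root_.convexHull_eq] at h
  obtain ⟨ι, t, w, z, hw0, hw1, hz, hc⟩ := h
  have hP : ∀ i ∈ t, ∃ (j : Fin n) (σ : ℝ), j ≠ ⟨0, hn⟩ ∧ |σ| = 1 ∧
      z i = σ • Γ.mulVec (Pi.single j 1) := by
    intro i hi
    rcases hz i hi with hmem | hmem
    · obtain ⟨j, hj, hv⟩ := hmem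
      exact ⟨j, 1, hj, abs_one, by simp [hv]⟩
    · rw [Set.mem_neg] at hmem
      obtain ⟨j, hj, hv⟩ := hmem
      refine ⟨j, -1, hj, by simp, ?_⟩
      have : z i = -(Γ.mulVec (Pi.single j 1)) := by rw [← hv]; ring_nf
      rw [this]; simp
  haveI : Nonempty (Fin n) := ⟨⟨0, hn⟩⟩
  choose! j σ hj hσ hzi using hP
  refine ⟨∑ i ∈ t, (w i * σ i) • (Pi.single (j i) (1:ℝ) : Fin n → ℝ), ?_, ?_, ?_⟩
  · rw [Finset.sum_apply]
    refine Finset.sum_eq_zero fun i hi => ?_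
    simp only [Pi.smul_apply, smul_eq_mul]
    rw [Pi.single_eq_of_ne (Ne.symm (hj i hi)), mul_zero]
  · calc l1norm (∑ i ∈ t, (w i * σ i) • (Pi.single (j i) (1:ℝ) : Fin n → ℝ))
        ≤ ∑ i ∈ t, l1norm ((w i * σ i) • (Pi.single (j i) (1:ℝ) : Fin n → ℝ)) := l1norm_sum_le t _
      _ = ∑ i ∈ t, w i := by
          refine Finset.sum_congr rfl fun i hi => ?_
          rw [l1norm_smul, l1norm_single, mul_one, abs_mul, hσ i hi, mul_one,
            abs_of_nonneg (hw0 i hi)]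
      _ = 1 := hw1
  · rw [mulVec_sum']
    rw [← hc, Finset.centerMass_eq_of_sum_1 t z hw1]
    refine Finset.sum_congr rfl fun i hi => ?_
    rw [Matrix.mulVec_smul, hzi i hi, mul_smul]

lemma l2norm_nonneg {n : ℕ} (x : Fin n → ℝ) : 0 ≤ l2norm x := Real.sqrt_nonneg _

lemma l2norm_zero {n : ℕ} : l2norm (0 : Fin n → ℝ) = 0 := by simp [l2norm]

/-- If the first column of `Γ` lies in the absolute convex hull of the
remaining columns, then `φ(1,{1}) = 0` and `κ(1,m,1) = 0` for every `1 ≤ m ≤ n`. -/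
theorem stmt18 {N n : ℕ} (hn : 0 < n) (Γ : Matrix (Fin N) (Fin n) ℝ)
    (h : Γ.mulVec (Pi.single (⟨0, hn⟩ : Fin n) 1) ∈
      absconv {v | ∃ j : Fin n, j ≠ ⟨0, hn⟩ ∧ v = Γ.mulVec (Pi.single j 1)}) :
    compat Γ 1 {(⟨0, hn⟩ : Fin n)} = 0 ∧
      ∀ m : ℕ, 1 ≤ m → m ≤ n → recConst Γ 1 m 1 = 0 := by

  obtain ⟨ζ, hζ0, hζ1, hζΓ⟩ := key hn Γ h
  constructor
  · rw [compat]
    rw [sInf_eq_zero' ?h0 ?hlb, mul_zero]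
    case hlb =>
      rintro r ⟨ζS, ζSc, -, -, -, -, rfl⟩
      exact l2norm_nonneg _
    case h0 =>
      refine ⟨Pi.single ⟨0, hn⟩ 1, ζ, ?_, ?_, l1norm_single _, hζ1, ?_⟩
      · intro j hj
        exact Pi.single_eq_of_ne (by simpa using hj) 1
      · intro j hj
        rw [Finset.mem_singleton] at hj
        rw [hj]; exact hζ0
      · rw [hζΓ, sub_self, l2norm_zero]
  · intro m hm hmn
    set x : Fin n → ℝ := Pi.single ⟨0, hn⟩ 1 - ζ with hxdef
    have hx0 : x ⟨0, hn⟩ = 1 := by simp [hxdef, hζ0]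
    have hxj : ∀ j : Fin n, j ≠ ⟨0, hn⟩ → x j = -ζ j := by
      intro j hj
      simp [hxdef, Pi.single_eq_of_ne hj]
    obtain ⟨S₁, hS₁T, hS₁card, hS₁max⟩ := exists_top (fun j => |x j|) (min m (n - 1))
      (Finset.univ.erase ⟨0, hn⟩) (by
        rw [Finset.card_erase_of_mem (Finset.mem_univ _), Finset.card_univ, Fintype.card_fin]
        exact min_le_right _ _)
    rw [recConst]
    refine sInf_eq_zero' ?_ ?_
    · refine ⟨{⟨0, hn⟩}, S₁, x, ?_, by simp, ?_, ?_, ?_, ?_, ?_⟩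
      · intro hx'
        rw [hx'] at hx0
        simp at hx0
      · exact Finset.disjoint_singleton_left.mpr
          (fun hmem => (Finset.mem_erase.1 (hS₁T hmem)).1 rfl)
      · simpa using hS₁card
      · intro i hi j hj0 hjS₁
        refine hS₁max i hi j ?_ hjS₁
        exact Finset.mem_erase.2 ⟨fun e => hj0 (by simp [e]), Finset.mem_univ j⟩
      · have hR : l1norm (fun j => if j ∈ ({⟨0, hn⟩} : Finset (Fin n)) then x j else 0) = 1 := by
          simp [l1norm, apply_ite abs, Finset.sum_ite_eq', hx0]
        have hL : l1norm (fun j => if j ∈ ({⟨0, hn⟩} : Finset (Fin n)) then 0 else x j)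
            ≤ l1norm ζ := by
          unfold l1norm
          refine Finset.sum_le_sum fun j _ => ?_
          by_cases hj : j = ⟨0, hn⟩
          · simp [hj]
          · simp only [Finset.mem_singleton]
            rw [if_neg hj, hxj j hj, abs_neg]
        rw [hR, mul_one]
        exact hL.trans hζ1
      · have hΓx : Γ.mulVec x = 0 := by
          rw [hxdef, Matrix.mulVec_sub, hζΓ, sub_self]
        rw [hΓx, l2norm_zero, zero_div]
    · rintro r ⟨S₀, S₁, x, -, -, -, -, -, -, rfl⟩
      exact div_nonneg (l2norm_nonneg _) (l2norm_nonneg _)
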